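/- arXiv:2509.23950 — 6 statements merged into one kernel-verified Lean document; each statement's English description precedes it below -/
import Mathlib

section
/- Let Γ be a group, S ⊆ Γ, and ρ : Γ → U(n) a map with ρ(e) = 1 and ‖ρ(st) - ρ(s)ρ(t)‖ < δ ≤ 1/2 for all s, t ∈ S. Define ω(a,b) = (1/(2πi))·Tr(log(ρ(a)ρ(b)ρ(ab)⁻¹)). Then for all a, b, c with a, b, c, ab, bc ∈ S, the 2-cocycle identity holds: ω(a,b) + ω(ab,c) = ω(a,bc) + ω(b,c). -/
open scoped Matrix.Norms.L2Operator

/-- The matrix logarithm defined by the power series centered at `1`. -/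
noncomputable def mlog {n : ℕ} (m : Matrix (Fin n) (Fin n) ℂ) : Matrix (Fin n) (Fin n) ℂ :=
  ∑' k : ℕ, ((-1 : ℂ) ^ k / (k + 1)) • (m - 1) ^ (k + 1)

/-!
Differentiating the series term by term, `x ↦ tr (mlog x)` has derivative `X ↦ tr (x⁻¹ X)` on the
ball `‖x - 1‖ < 1`: cyclicity of the trace collapses the derivative of `tr ((x - 1) ^ (k + 1))` to
`(k + 1) tr ((x - 1) ^ k X)`, and the coefficients turn the sum into the geometric series of `x⁻¹`.
Along `γ t = 1 + t (u - 1)`, the function `tr mlog (γ t v) - tr mlog (γ t)` then has derivative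
`tr (v⁻¹ γ⁻¹ (u - 1) v) - tr (γ⁻¹ (u - 1)) = 0`, whence `tr mlog (u v) = tr mlog u + tr mlog v` as
soon as `‖v‖ ≤ 1` and `‖u - 1‖ + ‖v - 1‖ < 1`. As `tr mlog` is also invariant under conjugation, the
cocycle identity follows from the factorisation
`σ(a,b) σ(ab,c) = ρ(a) σ(b,c) ρ(a)⁻¹ σ(a,bc)` of the defects `σ(s,t) = ρ(s) ρ(t) ρ(st)⁻¹`, which are
unitary and `δ`-close to `1` with `2δ ≤ 1`.
-/

theorem CStarRing.norm_one_le {E : Type*} [NormedRing E] [StarRing E] [CStarRing E] :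
    ‖(1 : E)‖ ≤ 1 := by
  rcases subsingleton_or_nontrivial E with hE | hE
  · simp [Subsingleton.elim (1 : E) 0]
  · exact CStarRing.norm_one.le

theorem CStarRing.norm_pow_le {E : Type*} [NormedRing E] [StarRing E] [CStarRing E] (a : E)
    (k : ℕ) : ‖a ^ k‖ ≤ ‖a‖ ^ k := by
  rcases k with _ | k
  · simpa using CStarRing.norm_one_le
  · exact norm_pow_le' a k.succ_pos

namespace Unitary
variable {E : Type*} [NormedRing E] [StarRing E] [CStarRing E]

theorem norm_coe_le_one (U : unitary E) : ‖(U : E)‖ ≤ 1 := by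
  simpa using (CStarRing.norm_coe_unitary_mul U 1).trans_le CStarRing.norm_one_le

theorem norm_coe_mul_mul_inv_sub_one (U V W : unitary E) :
    ‖((U * V * W⁻¹ : unitary E) : E) - 1‖ = ‖(W : E) - U * V‖ := by
  have h : ((U * V * W⁻¹ : unitary E) : E) - 1 = ((U : E) * V - W) * (W⁻¹ : unitary E) := by
    rw [sub_mul, ← Unitary.star_eq_inv, Unitary.coe_star, Unitary.mul_star_self_of_mem W.2]; rfl
  rw [h, CStarRing.norm_mul_coe_unitary, norm_sub_rev]

theorem norm_coe_conj_sub_one (U X : unitary E) :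
    ‖((U * X * U⁻¹ : unitary E) : E) - 1‖ = ‖(X : E) - 1‖ := by
  have h : ((U * X * U⁻¹ : unitary E) : E) - 1 = (U : E) * (X - 1) * (U⁻¹ : unitary E) := by
    rw [mul_sub, sub_mul, mul_one, ← Unitary.star_eq_inv, Unitary.coe_star,
      Unitary.mul_star_self_of_mem U.2]; rfl
  rw [h, CStarRing.norm_mul_coe_unitary, CStarRing.norm_coe_unitary_mul]

end Unitary

section MatrixLog
variable {n : ℕ}
local notation "Mat" => Matrix (Fin n) (Fin n) ℂ

lemma norm_mlog_coeff_le_one (k : ℕ) : ‖(-1 : ℂ) ^ k / (k + 1)‖ ≤ 1 := by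
  rw [norm_div, norm_pow, norm_neg, norm_one, one_pow]
  exact div_le_one_of_le₀ (by norm_cast; simp) (norm_nonneg _)

lemma summable_mlog {x : Mat} (hx : ‖x - 1‖ < 1) :
    Summable fun k : ℕ => ((-1 : ℂ) ^ k / (k + 1)) • (x - 1) ^ (k + 1) := by
  refine .of_norm_bounded ((summable_geometric_of_lt_one (norm_nonneg _) hx).mul_left ‖x - 1‖)
    fun k => ?_
  rw [norm_smul, ← pow_succ']
  exact (mul_le_of_le_one_left (norm_nonneg _) (norm_mlog_coeff_le_one k)).trans
    (norm_pow_le' _ k.succ_pos)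

lemma trace_mlog_eq_tsum {x : Mat} (hx : ‖x - 1‖ < 1) :
    (mlog x).trace = ∑' k : ℕ, (-1 : ℂ) ^ k / (k + 1) * ((x - 1) ^ (k + 1)).trace := by
  rw [mlog]
  simpa using
    ((Matrix.traceLinearMap (Fin n) ℂ ℂ).toContinuousLinearMap.map_tsum (summable_mlog hx))

noncomputable def traceMul : Mat →L[ℂ] Mat →L[ℂ] ℂ :=
  ContinuousLinearMap.compL ℂ Mat Mat ℂ
      (LinearMap.toContinuousLinearMap (Matrix.traceLinearMap (Fin n) ℂ ℂ)) ∘L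
    ContinuousLinearMap.mul ℂ Mat

@[simp] lemma traceMul_apply (A X : Mat) : traceMul A X = (A * X).trace := rfl

lemma hasFDerivAt_trace_mlog_term (k : ℕ) (y : Mat) :
    HasFDerivAt (fun y : Mat => (-1 : ℂ) ^ k / (k + 1) * ((y - 1) ^ (k + 1)).trace)
      (traceMul ((1 - y) ^ k)) y := by
  have h := ((hasFDerivAt_id (𝕜 := ℂ) y).sub_const 1).fun_pow' (k + 1)
  have h2 := ((LinearMap.toContinuousLinearMap
    (Matrix.traceLinearMap (Fin n) ℂ ℂ)).hasFDerivAt.comp y h).const_mul ((-1 : ℂ) ^ k / (k + 1))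
  refine h2.congr_fderiv ?_
  ext X
  have hterm : ∀ i ∈ Finset.range (k + 1),
      ((y - 1) ^ (k - i) * X * (y - 1) ^ i).trace = ((y - 1) ^ k * X).trace := fun i hi => by
    rw [Matrix.trace_mul_comm, ← mul_assoc, ← pow_add,
      Nat.add_sub_cancel' (Nat.lt_succ_iff.mp (Finset.mem_range.mp hi))]
  have hneg : (1 - y) ^ k = (-1 : ℂ) ^ k • (y - 1) ^ k := by
    rw [← smul_pow, neg_one_smul, neg_sub]
  simp [Finset.sum_congr rfl hterm, hneg, ← mul_assoc, Nat.cast_add_one_ne_zero]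

theorem hasFDerivAt_trace_mlog {x : Mat} (hx : ‖x - 1‖ < 1) :
    HasFDerivAt (fun y : Mat => (mlog y).trace) (traceMul x⁻¹) x := by
  obtain ⟨r, hxr, hr1⟩ := exists_between hx
  have hr0 : 0 ≤ r := (norm_nonneg _).trans hxr.le
  rw [← dist_eq_norm, ← Metric.mem_ball] at hxr
  have hbound : ∀ (k : ℕ), ∀ y ∈ Metric.ball (1 : Mat) r,
      ‖traceMul ((1 - y) ^ k)‖ ≤ ‖(traceMul : Mat →L[ℂ] Mat →L[ℂ] ℂ)‖ * r ^ k := fun k y hy => by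
    rw [Metric.mem_ball, dist_eq_norm'] at hy
    calc ‖traceMul ((1 - y) ^ k)‖ ≤ ‖(traceMul : Mat →L[ℂ] Mat →L[ℂ] ℂ)‖ * ‖(1 - y) ^ k‖ :=
          traceMul.le_opNorm _
      _ ≤ _ := by
          gcongr
          exact (CStarRing.norm_pow_le _ k).trans (pow_le_pow_left₀ (norm_nonneg _) hy.le k)
  have htsum : HasFDerivAt
      (fun y : Mat => ∑' k : ℕ, (-1 : ℂ) ^ k / (k + 1) * ((y - 1) ^ (k + 1)).trace)
      (∑' k : ℕ, traceMul ((1 - x) ^ k)) x :=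
    hasFDerivAt_tsum_of_isPreconnected ((summable_geometric_of_lt_one hr0 hr1).mul_left _)
      Metric.isOpen_ball (convex_ball _ _).isPreconnected
      (fun k y _ => hasFDerivAt_trace_mlog_term k y) hbound hxr
      (by simpa using
        (Matrix.traceLinearMap (Fin n) ℂ ℂ).toContinuousLinearMap.summable (summable_mlog hx))
      hxr
  have hinv : ∑' k : ℕ, traceMul ((1 - x) ^ k) = traceMul x⁻¹ := by
    have h1x : ‖1 - x‖ < 1 := by rwa [norm_sub_rev]
    rw [← traceMul.map_tsum (summable_geometric_of_norm_lt_one h1x),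
      geom_series_eq_inverse _ h1x, sub_sub_cancel, Matrix.nonsing_inv_eq_ringInverse]
  rw [← hinv]
  refine htsum.congr_of_eventuallyEq ?_
  filter_upwards [Metric.isOpen_ball.mem_nhds hxr] with y hy
  rw [Metric.mem_ball, dist_eq_norm] at hy
  exact trace_mlog_eq_tsum (hy.trans hr1)

theorem HasDerivAt.trace_mlog {γ : ℝ → Mat} {γ' : Mat} {t : ℝ} (hγ : HasDerivAt γ γ' t)
    (ht : ‖γ t - 1‖ < 1) :
    HasDerivAt (fun s => (mlog (γ s)).trace) ((γ t)⁻¹ * γ').trace t :=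
  ((hasFDerivAt_trace_mlog ht).restrictScalars ℝ).comp_hasDerivAt t hγ

lemma mlog_one : mlog (1 : Mat) = 0 := by
  simp [mlog]

lemma mul_nonsing_inv_of_norm_sub_one_lt {v : Mat} (hv : ‖v - 1‖ < 1) : v * v⁻¹ = 1 := by
  have hunit : IsUnit v := by
    simpa using isUnit_one_sub_of_norm_lt_one (x := 1 - v) (by rwa [norm_sub_rev])
  exact Matrix.mul_nonsing_inv v ((Matrix.isUnit_iff_isUnit_det v).mp hunit)

theorem trace_mlog_mul {u v : Mat} (hv : ‖v‖ ≤ 1) (huv : ‖u - 1‖ + ‖v - 1‖ < 1) :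
    (mlog (u * v)).trace = (mlog u).trace + (mlog v).trace := by
  set γ : ℝ → Mat := fun t => 1 + t • (u - 1)
  have hγ : ∀ t, HasDerivAt γ (u - 1) t := fun t => by
    simpa [γ] using ((hasDerivAt_id t).smul_const (u - 1)).const_add 1
  have hγ_near : ∀ t ∈ Set.Icc (0 : ℝ) 1, ‖γ t - 1‖ ≤ ‖u - 1‖ := fun t ht => by
    simpa [γ, norm_smul, abs_of_nonneg ht.1] using
      mul_le_of_le_one_left (norm_nonneg (u - 1)) ht.2
  have hγv_near : ∀ t ∈ Set.Icc (0 : ℝ) 1, ‖γ t * v - 1‖ < 1 := fun t ht => by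
    calc ‖γ t * v - 1‖ = ‖(γ t - 1) * v + (v - 1)‖ := by
          rw [sub_mul, one_mul, sub_add_sub_cancel]
      _ ≤ ‖γ t - 1‖ * ‖v‖ + ‖v - 1‖ := (norm_add_le _ _).trans (by gcongr; exact norm_mul_le _ _)
      _ ≤ ‖u - 1‖ * 1 + ‖v - 1‖ := by gcongr; exact hγ_near t ht
      _ < 1 := by linarith
  have hvv : v * v⁻¹ = 1 := mul_nonsing_inv_of_norm_sub_one_lt (by linarith [norm_nonneg (u - 1)])
  have hderiv : ∀ t ∈ Set.Icc (0 : ℝ) 1,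
      HasDerivAt (fun s => (mlog (γ s * v)).trace - (mlog (γ s)).trace) 0 t := fun t ht => by
    have h := (((hγ t).mul_const v).trace_mlog (hγv_near t ht)).sub
      ((hγ t).trace_mlog ((hγ_near t ht).trans_lt (by linarith [norm_nonneg (v - 1)])))
    rwa [Matrix.mul_inv_rev, Matrix.trace_mul_comm, ← mul_assoc, mul_assoc (u - 1), hvv, mul_one,
      Matrix.trace_mul_comm (u - 1), sub_self] at h
  have hconst := constant_of_has_deriv_right_zero
    (fun t ht => (hderiv t ht).continuousAt.continuousWithinAt)
    (fun t ht => (hderiv t (Set.Ico_subset_Icc_self ht)).hasDerivWithinAt) 1 ⟨zero_le_one, le_rfl⟩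
  simp only [γ, one_smul, add_sub_cancel, zero_smul, add_zero, one_mul, mlog_one,
    Matrix.trace_zero, sub_zero] at hconst
  linear_combination hconst

theorem mlog_algEquiv (φ : Mat ≃ₐ[ℂ] Mat) (x : Mat) : mlog (φ x) = φ (mlog x) := by
  rw [mlog, mlog]
  have h := (φ.toLinearEquiv.toContinuousLinearEquiv).map_tsum
    (L := .unconditional ℕ) (f := fun k : ℕ => ((-1 : ℂ) ^ k / (k + 1)) • (x - 1) ^ (k + 1))
  simpa using h.symm

theorem trace_mlog_units_conj (g : Matˣ) (x : Mat) :
    (mlog ((g : Mat) * x * (↑g⁻¹ : Mat))).trace = (mlog x).trace := by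
  have h := mlog_algEquiv (MulSemiringAction.toAlgEquiv ℂ Mat (ConjAct.toConjAct g)) x
  simp only [MulSemiringAction.toAlgEquiv_apply, ConjAct.units_smul_def,
    ConjAct.ofConjAct_toConjAct] at h
  rw [h, Matrix.trace_mul_cycle, Units.inv_mul, one_mul]

end MatrixLog

theorem local_cocycle_identity_general {n : ℕ} {Γ : Type*} [Group Γ] (S : Set Γ) (δ : ℝ)
    (hδ : δ ≤ 1 / 2) (ρ : Γ → Matrix.unitaryGroup (Fin n) ℂ)
    (hmul : ∀ s ∈ S, ∀ t ∈ S,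
      ‖((ρ (s * t) : Matrix (Fin n) (Fin n) ℂ) - (ρ s : Matrix (Fin n) (Fin n) ℂ) * ρ t)‖ < δ)
    (ω : Γ → Γ → ℂ)
    (hω : ∀ a b : Γ, ω a b = (1 / (2 * Real.pi * Complex.I)) *
      (mlog ((ρ a * ρ b * (ρ (a * b))⁻¹ : Matrix.unitaryGroup (Fin n) ℂ) :
        Matrix (Fin n) (Fin n) ℂ)).trace)
    {a b c : Γ} (ha : a ∈ S) (hb : b ∈ S) (hc : c ∈ S)
    (hab : a * b ∈ S) (hbc : b * c ∈ S) :
    ω a b + ω (a * b) c = ω a (b * c) + ω b c := by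
  set σ : Γ → Γ → Matrix.unitaryGroup (Fin n) ℂ := fun s t => ρ s * ρ t * (ρ (s * t))⁻¹
  have hσ : ∀ s ∈ S, ∀ t ∈ S, ‖(σ s t : Matrix (Fin n) (Fin n) ℂ) - 1‖ < δ := fun s hs t ht =>
    (Unitary.norm_coe_mul_mul_inv_sub_one _ _ _).trans_lt (hmul s hs t ht)
  have hσ_conj : ‖((ρ a * σ b c * (ρ a)⁻¹ : Matrix.unitaryGroup (Fin n) ℂ) :
      Matrix (Fin n) (Fin n) ℂ) - 1‖ < δ :=
    (Unitary.norm_coe_conj_sub_one _ _).trans_lt (hσ b hb c hc)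
  have hfactor : σ a b * σ (a * b) c = ρ a * σ b c * (ρ a)⁻¹ * σ a (b * c) := by
    simp only [σ, mul_assoc a b c]; group
  have hleft := trace_mlog_mul (u := σ a b) (Unitary.norm_coe_le_one (σ (a * b) c))
    (by linarith [hσ a ha b hb, hσ (a * b) hab c hc])
  have hright := trace_mlog_mul (u := ρ a * σ b c * (ρ a)⁻¹)
    (Unitary.norm_coe_le_one (σ a (b * c))) (by linarith [hσ_conj, hσ a ha (b * c) hbc])
  have hconj : (mlog ((ρ a * σ b c * (ρ a)⁻¹ : Matrix.unitaryGroup (Fin n) ℂ) :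
      Matrix (Fin n) (Fin n) ℂ)).trace = (mlog (σ b c : Matrix (Fin n) (Fin n) ℂ)).trace :=
    trace_mlog_units_conj (Unitary.toUnits (ρ a)) _
  rw [← Submonoid.coe_mul, hfactor, Submonoid.coe_mul, hright, hconj] at hleft
  simp only [hω, σ, ← mul_assoc a b c] at hleft ⊢
  linear_combination (1 / (2 * Real.pi * Complex.I)) * hleft.symm

/-- If `ρ : Γ → U(n)` is unital and `(S, δ)`-multiplicative with `δ ≤ 1/2`, then the local
2-cocycle `ω(a,b) = (1/2πi) Tr(log(ρ(a)ρ(b)ρ(ab)⁻¹))` satisfies the cocycle identity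
`ω(a,b) + ω(ab,c) = ω(a,bc) + ω(b,c)` whenever `a, b, c, ab, bc ∈ S`. -/
theorem local_cocycle_identity {n : ℕ} {Γ : Type*} [Group Γ] (S : Set Γ) (δ : ℝ)
    (hδ : δ ≤ 1 / 2) (ρ : Γ → Matrix.unitaryGroup (Fin n) ℂ) (hρ1 : ρ 1 = 1)
    (hmul : ∀ s ∈ S, ∀ t ∈ S,
      ‖((ρ (s * t) : Matrix (Fin n) (Fin n) ℂ) - (ρ s : Matrix (Fin n) (Fin n) ℂ) * ρ t)‖ < δ)
    (ω : Γ → Γ → ℂ)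
    (hω : ∀ a b : Γ, ω a b = (1 / (2 * Real.pi * Complex.I)) *
      (mlog ((ρ a * ρ b * (ρ (a * b))⁻¹ : Matrix.unitaryGroup (Fin n) ℂ) :
        Matrix (Fin n) (Fin n) ℂ)).trace)
    {a b c : Γ} (ha : a ∈ S) (hb : b ∈ S) (hc : c ∈ S)
    (hab : a * b ∈ S) (hbc : b * c ∈ S) :
    ω a b + ω (a * b) c = ω a (b * c) + ω b c :=
  local_cocycle_identity_general S δ hδ ρ hmul ω hω ha hb hc hab hbc
end

section
/- Let D be a unital C*-algebra, p ∈ D a self-adjoint projection, and w ∈ D a contraction with ‖w*w - 1‖ < ε and ‖ww* - p‖ < ε, where ε < 1/15. Then there exists u ∈ D with u*u = 1, uu* = p, and ‖u - w‖ < 12ε. -/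
/-!
The polar part `v = w (w⋆w)^{-1/2}` of `w` is an isometry with `‖v - w‖ ≤ ‖w⋆w - 1‖ < ε`, so its
range projection `q = v v⋆` lies within `3ε` of `p`. Projections that close are conjugate by a
unitary near `1`: the polar part `z` of `a = q p + (1 - q)(1 - p)` satisfies `z p = q z`, and
`‖z - 1‖ ≤ ‖p - q‖ + 2‖p - q‖²` because `a - 1 = (2q - 1)(p - q)` and `a⋆a = 1 - (p - q)²`.
Then `u = z⋆ v` has `u⋆u = 1`, `u u⋆ = z⋆ q z = p` and `‖u - w‖ ≤ ‖v - w‖ + ‖z - 1‖ < 12ε`.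
-/

lemma abs_inv_sqrt_sub_one_le {t : ℝ} (ht : 1 / 2 ≤ t) : |(√t)⁻¹ - 1| ≤ |t - 1| := by
  have hs : 0 < √t := Real.sqrt_pos.mpr (by linarith)
  have hst : √t * √t = t := Real.mul_self_sqrt (by linarith)
  have key : (√t)⁻¹ - 1 = -(t - 1) / (√t * (1 + √t)) := by
    field_simp; nlinarith
  have hden : 1 ≤ √t * (1 + √t) := by nlinarith [Real.sqrt_le_sqrt ht]
  rw [key, abs_div, abs_neg, abs_of_pos (a := √t * (1 + √t)) (by positivity)]
  exact div_le_self (abs_nonneg _) hden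

lemma continuousOn_inv_sqrt {s : Set ℝ} (hs : ∀ t ∈ s, 0 < t) :
    ContinuousOn (fun t => (√t)⁻¹) s :=
  Real.continuous_sqrt.continuousOn.inv₀ fun t ht => (Real.sqrt_pos.mpr (hs t ht)).ne'

section Intertwiner

variable {R : Type*} [Ring R] {p q : R}

def intertwiner (p q : R) : R := q * p + (1 - q) * (1 - p)

lemma IsIdempotentElem.intertwiner_mul (hp : IsIdempotentElem p) (hq : IsIdempotentElem q) :
    intertwiner p q * p = q * intertwiner p q := by
  simp only [intertwiner, add_mul, mul_add, mul_assoc, hp.one_sub_mul_self,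
    ← mul_assoc q (1 - q), hq.mul_one_sub_self, hp.eq, mul_zero, zero_mul, add_zero]
  rw [← mul_assoc, hq.eq]

lemma IsIdempotentElem.intertwiner_sub_one (hq : IsIdempotentElem q) :
    intertwiner p q - 1 = (2 * q - 1) * (p - q) := by
  simp only [intertwiner, two_mul, add_mul, mul_sub, sub_mul, mul_one, one_mul, hq.eq]
  abel

lemma IsIdempotentElem.intertwiner_mul_intertwiner (hp : IsIdempotentElem p)
    (hq : IsIdempotentElem q) :
    intertwiner q p * intertwiner p q = 1 - (p - q) * (p - q) := by
  simp only [intertwiner, mul_add, add_mul, mul_sub, sub_mul, mul_one, one_mul, mul_assoc,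
    hp.eq, hq.eq, hq.mul_self_mul]
  abel

lemma star_intertwiner [StarRing R] (hp : IsSelfAdjoint p) (hq : IsSelfAdjoint q) :
    star (intertwiner p q) = intertwiner q p := by
  simp only [intertwiner, star_add, star_mul, star_sub, star_one, hp.star_eq, hq.star_eq]

end Intertwiner

section CStarAlgebra

variable {A : Type*} [CStarAlgebra A]

lemma abs_sub_one_le_norm_sub_one_of_mem_spectrum {a : A} {t : ℝ} (ht : t ∈ spectrum ℝ a) :
    |t - 1| ≤ ‖a - 1‖ := by
  have : Nontrivial A := by
    by_contra h
    rw [not_nontrivial_iff_subsingleton] at h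
    simp [spectrum.of_subsingleton] at ht
  have h1 : t - 1 ∈ spectrum ℝ (a - algebraMap ℝ A 1) := by
    rw [← spectrum.sub_singleton_eq]; exact Set.sub_mem_sub ht rfl
  simpa using spectrum.norm_le_norm_of_mem h1

lemma norm_mul_of_star_mul_self_eq_one {v : A} (hv : star v * v = 1) (y : A) :
    ‖v * y‖ = ‖y‖ := by
  rw [← sq_eq_sq₀ (norm_nonneg _) (norm_nonneg _)]
  simp [sq, ← CStarRing.norm_star_mul_self, mul_assoc, ← mul_assoc (star v), hv]

lemma norm_mul_star_sub_mul_star_le {v w : A} (hv : star v * v = 1) (hw : ‖w‖ ≤ 1) :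
    ‖v * star v - w * star w‖ ≤ 2 * ‖v - w‖ := by
  have key : v * star v - w * star w = v * star (v - w) + (v - w) * star w := by
    rw [star_sub]; noncomm_ring
  calc ‖v * star v - w * star w‖ ≤ ‖v * star (v - w)‖ + ‖(v - w) * star w‖ :=
        key ▸ norm_add_le _ _
    _ ≤ ‖v - w‖ + ‖v - w‖ * ‖w‖ := by
      rw [norm_mul_of_star_mul_self_eq_one hv, norm_star, ← norm_star w]
      gcongr; exact norm_mul_le _ _
    _ ≤ 2 * ‖v - w‖ := by nlinarith [norm_nonneg (v - w)]

lemma isStarProjection_mul_star_self {v : A} (hv : star v * v = 1) :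
    IsStarProjection (v * star v) where
  isIdempotentElem := by rw [IsIdempotentElem, mul_assoc, ← mul_assoc (star v), hv, one_mul]
  isSelfAdjoint := .mul_star_self v

lemma norm_star_mul_sub_le {z v w : A} (hz : z ∈ unitary A) (hw : ‖w‖ ≤ 1) :
    ‖star z * v - w‖ ≤ ‖v - w‖ + ‖z - 1‖ := by
  have key : star z * v - w = star z * (v - w) + (star z - 1) * w := by noncomm_ring
  calc ‖star z * v - w‖ ≤ ‖star z * (v - w)‖ + ‖(star z - 1) * w‖ := key ▸ norm_add_le _ _
    _ ≤ ‖v - w‖ + ‖z - 1‖ * ‖w‖ := by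
      rw [CStarRing.norm_mem_unitary_mul _ (Unitary.star_mem hz), ← norm_star (z - 1), star_sub,
        star_one]
      gcongr; exact norm_mul_le _ _
    _ ≤ ‖v - w‖ + ‖z - 1‖ := by gcongr; exact mul_le_of_le_one_right (norm_nonneg _) hw

noncomputable def polarPart (x : A) : A := x * cfc (fun t : ℝ => (√t)⁻¹) (star x * x)

variable {x : A}

lemma pos_of_mem_spectrum_star_mul_self (hx : ‖star x * x - 1‖ < 1) :
    ∀ t ∈ spectrum ℝ (star x * x), 0 < t := fun t ht => by
  linarith [(abs_le.mp (abs_sub_one_le_norm_sub_one_of_mem_spectrum ht)).1]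

lemma star_polarPart_mul_self (hx : ‖star x * x - 1‖ < 1) :
    star (polarPart x) * polarPart x = 1 := by
  have hpos := pos_of_mem_spectrum_star_mul_self hx
  have hcont := continuousOn_inv_sqrt hpos
  calc star (polarPart x) * polarPart x
      = cfc (fun t : ℝ => (√t)⁻¹) (star x * x) * cfc (fun t : ℝ => t) (star x * x) *
          cfc (fun t : ℝ => (√t)⁻¹) (star x * x) := by
        rw [polarPart, star_mul, (cfc_predicate (fun t : ℝ => (√t)⁻¹) (star x * x)).star_eq,
          cfc_id' ℝ (star x * x)]
        noncomm_ring
    _ = cfc (fun t : ℝ => (√t)⁻¹ * t * (√t)⁻¹) (star x * x) := by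
        rw [← cfc_mul _ _ _ hcont (continuousOn_id' _),
          ← cfc_mul (fun t : ℝ => (√t)⁻¹ * t) _ _ (hcont.mul (continuousOn_id' _)) hcont]
    _ = 1 := by
        rw [← cfc_const_one ℝ (star x * x)]
        refine cfc_congr fun t ht => ?_
        have := Real.mul_self_sqrt (hpos t ht).le
        have := (Real.sqrt_pos.mpr (hpos t ht)).ne'
        field_simp
        linarith

lemma norm_polarPart_sub_le (hx : ‖star x * x - 1‖ ≤ 1 / 2) :
    ‖polarPart x - x‖ ≤ ‖x‖ * ‖star x * x - 1‖ := by
  have hspec : ∀ t ∈ spectrum ℝ (star x * x), |t - 1| ≤ ‖star x * x - 1‖ :=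
    fun t ht => abs_sub_one_le_norm_sub_one_of_mem_spectrum ht
  have hhalf : ∀ t ∈ spectrum ℝ (star x * x), 1 / 2 ≤ t := fun t ht => by
    linarith [(abs_le.mp (hspec t ht)).1]
  have hcont := continuousOn_inv_sqrt fun t ht => one_half_pos.trans_le (hhalf t ht)
  have key : polarPart x - x = x * cfc (fun t : ℝ => (√t)⁻¹ - 1) (star x * x) := by
    rw [cfc_sub _ _ _ hcont continuousOn_const, cfc_const_one ℝ (star x * x), polarPart,
      mul_sub, mul_one]
  rw [key]
  refine (norm_mul_le _ _).trans (mul_le_mul_of_nonneg_left ?_ (norm_nonneg _))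
  refine norm_cfc_le (norm_nonneg _) fun t ht => ?_
  rw [Real.norm_eq_abs]
  exact (abs_inv_sqrt_sub_one_le (hhalf t ht)).trans (hspec t ht)

lemma polarPart_mul_eq_mul_polarPart {p q : A} (hp : IsSelfAdjoint p) (hq : IsSelfAdjoint q)
    (h : x * p = q * x) : polarPart x * p = q * polarPart x := by
  have hstar : p * star x = star x * q := by
    simpa only [star_mul, hp.star_eq, hq.star_eq] using congrArg star h
  have hcomm : Commute (star x * x) p := by
    rw [Commute, SemiconjBy, mul_assoc, h, ← mul_assoc, ← hstar, mul_assoc]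
  rw [polarPart, mul_assoc, (hcomm.cfc_real _).eq, ← mul_assoc, h, mul_assoc]

lemma polarPart_mem_unitary (hx : IsUnit x) (hx1 : ‖star x * x - 1‖ < 1) :
    polarPart x ∈ unitary A := by
  have hpos := pos_of_mem_spectrum_star_mul_self hx1
  have hunit : IsUnit (polarPart x) :=
    hx.mul (isUnit_cfc _ _ (continuousOn_inv_sqrt hpos) (.star_mul_self x)
      fun t ht => inv_ne_zero (Real.sqrt_pos.mpr (hpos t ht)).ne')
  have hstar := star_polarPart_mul_self hx1
  refine Unitary.mem_iff.mpr ⟨hstar, hunit.mul_left_inj.mp ?_⟩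
  rw [mul_assoc, hstar, one_mul, mul_one]

lemma exists_unitary_mul_eq_mul_of_norm_sub_le {p q : A} (hp : IsStarProjection p)
    (hq : IsStarProjection q) (hpq : ‖p - q‖ ≤ 1 / 2) :
    ∃ z ∈ unitary A, z * p = q * z ∧ ‖z - 1‖ ≤ ‖p - q‖ + 2 * ‖p - q‖ ^ 2 := by
  nontriviality A
  set a := intertwiner p q
  have hd : 0 ≤ ‖p - q‖ := norm_nonneg _
  have ha1 : ‖a - 1‖ = ‖p - q‖ := by
    rw [hq.isIdempotentElem.intertwiner_sub_one,
      CStarRing.norm_mem_unitary_mul _ hq.two_mul_sub_one_mem_unitary]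
  have haa : ‖star a * a - 1‖ = ‖p - q‖ ^ 2 := by
    rw [star_intertwiner hp.isSelfAdjoint hq.isSelfAdjoint,
      hp.isIdempotentElem.intertwiner_mul_intertwiner hq.isIdempotentElem, sub_sub_cancel_left,
      norm_neg]
    nth_rw 2 [← (hp.isSelfAdjoint.sub hq.isSelfAdjoint).star_eq]
    rw [CStarRing.norm_self_mul_star, sq]
  have ha : IsUnit a := by
    by_contra h
    exact nonunits.subset_compl_ball h (mem_ball_iff_norm.mpr (by rw [ha1]; linarith))
  have hnorm : ‖a‖ ≤ 2 := by
    calc ‖a‖ ≤ ‖a - 1‖ + ‖(1 : A)‖ := norm_le_norm_sub_add _ _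
      _ ≤ 2 := by rw [ha1, norm_one]; linarith
  refine ⟨polarPart a, polarPart_mem_unitary ha (by rw [haa]; nlinarith),
    polarPart_mul_eq_mul_polarPart hp.isSelfAdjoint hq.isSelfAdjoint
      (hp.isIdempotentElem.intertwiner_mul hq.isIdempotentElem), ?_⟩
  calc ‖polarPart a - 1‖ ≤ ‖polarPart a - a‖ + ‖a - 1‖ :=
        norm_sub_le_norm_sub_add_norm_sub _ _ _
    _ ≤ ‖a‖ * ‖star a * a - 1‖ + ‖a - 1‖ := by
      gcongr; exact norm_polarPart_sub_le (by rw [haa]; nlinarith)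
    _ ≤ ‖p - q‖ + 2 * ‖p - q‖ ^ 2 := by
      rw [haa, ha1]; nlinarith [sq_nonneg ‖p - q‖]

end CStarAlgebra

/-- In a unital C*-algebra, if `p` is a self-adjoint projection and `w` is a contraction with
`‖w*w - 1‖ < ε` and `‖ww* - p‖ < ε` for some `ε < 1/15`, then there is a partial isometry `u`
with `u*u = 1`, `uu* = p` and `‖u - w‖ < 12ε`. -/
theorem exists_partial_isometry_near {D : Type*} [NormedRing D] [StarRing D] [CStarRing D]
    [CompleteSpace D] [NormedAlgebra ℂ D] [StarModule ℂ D]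
    (p w : D) (hp_sa : IsSelfAdjoint p) (hp_idem : IsIdempotentElem p)
    (hw : ‖w‖ ≤ 1) (ε : ℝ) (h1 : ‖star w * w - 1‖ < ε) (h2 : ‖w * star w - p‖ < ε)
    (hε : ε < 1 / 15) :
    ∃ u : D, star u * u = 1 ∧ u * star u = p ∧ ‖u - w‖ < 12 * ε := by
  let _ : CStarAlgebra D := {}
  set v := polarPart w
  have hv : star v * v = 1 := star_polarPart_mul_self (by linarith)
  have hvw : ‖v - w‖ < ε := (norm_polarPart_sub_le (by linarith)).trans_lt <|
    (mul_le_of_le_one_left (norm_nonneg _) hw).trans_lt h1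
  have hpq : ‖p - v * star v‖ < 3 * ε := by
    calc ‖p - v * star v‖ ≤ ‖v * star v - w * star w‖ + ‖w * star w - p‖ := by
          rw [norm_sub_rev]; exact norm_sub_le_norm_sub_add_norm_sub _ _ _
      _ < 3 * ε := by linarith [norm_mul_star_sub_mul_star_le hv hw]
  obtain ⟨z, hz, hzp, hz1⟩ := exists_unitary_mul_eq_mul_of_norm_sub_le ⟨hp_idem, hp_sa⟩
    (isStarProjection_mul_star_self hv) (by linarith)
  refine ⟨star z * v, ?_, ?_, ?_⟩
  · rw [star_mul, star_star, mul_assoc, ← mul_assoc z, Unitary.mul_star_self_of_mem hz, one_mul, hv]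
  · rw [star_mul, star_star, mul_assoc, ← mul_assoc v, ← hzp, ← mul_assoc,
      Unitary.star_mul_self_of_mem hz, one_mul]
  · calc ‖star z * v - w‖ ≤ ‖v - w‖ + ‖z - 1‖ := norm_star_mul_sub_le hz hw
      _ < 12 * ε := by nlinarith [norm_nonneg (p - v * star v)]
end

section
/- Let G be an abelian group and (Zₙ)ₙ a countable family of copies of ℤ. Then the natural map G ⊗ ∏ₙ ℤ → ∏ₙ G, sending g ⊗ (xₙ)ₙ to (xₙ·g)ₙ, is injective. -/
/-!
The map `M ⊗[R] (ι → R) → (ι → M)` is natural in `M` and bijective for `M = R^κ`, `κ` finite.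
Tensoring is right exact and `ι → -` is exact, so the five lemma applied to a finite presentation
`R^m → R^n → M → 0` makes it bijective for every finitely presented `M`. Over a Noetherian ring
every element of `M ⊗[R] (ι → R)` comes from `N ⊗[R] (ι → R)` for a finitely generated, hence
finitely presented, submodule `N ≤ M`, and `ι → N` embeds in `ι → M`; this gives injectivity for
arbitrary `M`, in particular for every abelian group over `ℤ`.
-/

open TensorProduct

/-- The natural bilinear map `G × ∏ₙ ℤ → ∏ₙ G`, `(g, x) ↦ (xₙ • g)ₙ`, as a linear map on the
tensor product `G ⊗[ℤ] ∏ₙ ℤ`. -/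
noncomputable def tensorPiIntMap (G : Type*) [AddCommGroup G] :
    G ⊗[ℤ] (ℕ → ℤ) →ₗ[ℤ] (ℕ → G) :=
  TensorProduct.lift <| LinearMap.mk₂ ℤ (fun (g : G) (x : ℕ → ℤ) (n : ℕ) => x n • g)
    (fun g g' x => by funext n; exact smul_add _ _ _)
    (fun c g x => by funext n; exact (smul_comm c (x n) g).symm)
    (fun g x x' => by funext n; exact add_smul _ _ _)
    (fun c g x => by
      funext n
      show (c * x n) • g = c • (x n • g)
      rw [mul_smul])

theorem Function.Exact.compLeft {R M₁ M₂ M₃ : Type*} [Semiring R]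
    [AddCommMonoid M₁] [AddCommMonoid M₂] [AddCommMonoid M₃]
    [Module R M₁] [Module R M₂] [Module R M₃] {f : M₁ →ₗ[R] M₂} {g : M₂ →ₗ[R] M₃}
    (h : Function.Exact f g) (ι : Type*) : Function.Exact (f.compLeft ι) (g.compLeft ι) := by
  intro y
  constructor
  · intro hy
    choose x hx using fun i => (h (y i)).1 (congrFun hy i)
    exact ⟨x, funext hx⟩
  · rintro ⟨x, rfl⟩
    exact funext fun i => h.apply_apply_eq_zero (x i)

namespace TensorProduct

section CommSemiring

variable {R : Type*} [CommSemiring R] (ι : Type*)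

theorem compLeft_comp_piScalarRightHom {M N : Type*} [AddCommMonoid M] [Module R M]
    [AddCommMonoid N] [Module R N] (f : M →ₗ[R] N) :
    f.compLeft ι ∘ₗ piScalarRightHom R R M ι = piScalarRightHom R R N ι ∘ₗ f.rTensor (ι → R) := by
  ext m x i
  simp

theorem piScalarRightHom_pi_bijective (κ : Type*) [Finite κ] :
    Function.Bijective (piScalarRightHom R R (κ → R) ι) := by
  classical
  have : Fintype κ := Fintype.ofFinite κ
  have hswap : ∀ t, piScalarRightHom R R (κ → R) ι t =
      Function.swap (piScalarRight R R (ι → R) κ (TensorProduct.comm R _ _ t)) := by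
    intro t
    induction t with
    | zero => rfl
    | tmul x y => ext i k; simp [Function.swap, mul_comm]
    | add a b ha hb => ext i k; simp [ha, hb, Function.swap]
  rw [funext hswap]
  exact Function.swap_bijective.comp ((piScalarRight R R _ κ).bijective.comp
    (TensorProduct.comm R _ _).bijective)

end CommSemiring

variable {R : Type*} [CommRing R] (ι : Type*)

theorem piScalarRightHom_bijective_of_finitePresentation (M : Type*) [AddCommGroup M]
    [Module R M] [Module.FinitePresentation R M] :
    Function.Bijective (piScalarRightHom R R M ι) := by
  obtain ⟨n, m, f, g, hf, hgf⟩ := Module.FinitePresentation.exists_fin' R M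
  exact LinearMap.bijective_of_surjective_of_bijective_of_right_exact
    (g.rTensor (ι → R)) (f.rTensor (ι → R)) (g.compLeft ι) (f.compLeft ι)
    (piScalarRightHom R R _ ι) (piScalarRightHom R R _ ι) (piScalarRightHom R R M ι)
    (compLeft_comp_piScalarRightHom ι g) (compLeft_comp_piScalarRightHom ι f)
    (rTensor_exact _ hgf hf) (hgf.compLeft ι)
    (piScalarRightHom_pi_bijective ι _).surjective (piScalarRightHom_pi_bijective ι _)
    (LinearMap.rTensor_surjective _ hf) hf.comp_left

theorem piScalarRightHom_injective_of_isNoetherianRing [IsNoetherianRing R] (M : Type*)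
    [AddCommGroup M] [Module R M] : Function.Injective (piScalarRightHom R R M ι) := by
  refine (injective_iff_map_eq_zero _).2 fun t ht => ?_
  obtain ⟨N, _, hsub⟩ := exists_finite_submodule_left_of_setFinite {t} (Set.finite_singleton t)
  obtain ⟨t', rfl⟩ := hsub rfl
  have := Module.finitePresentation_of_finite R N
  have ht' : piScalarRightHom R R N ι t' = 0 := by
    apply N.injective_subtype.comp_left
    change N.subtype.compLeft ι _ = N.subtype.compLeft ι 0
    rw [map_zero]
    exact (LinearMap.congr_fun (compLeft_comp_piScalarRightHom ι N.subtype) t').trans ht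
  rw [(piScalarRightHom_bijective_of_finitePresentation ι N).injective
    (ht'.trans (map_zero _).symm), map_zero]

end TensorProduct

/-- For any abelian group `G`, the natural map `G ⊗ ∏ₙ ℤ → ∏ₙ G` sending
`g ⊗ (xₙ)ₙ` to `(xₙ • g)ₙ` is injective. -/
theorem tensorPiIntMap_injective (G : Type*) [AddCommGroup G] :
    Function.Injective (tensorPiIntMap G) := by
  have hG : tensorPiIntMap G = piScalarRightHom ℤ ℤ G ℕ := by
    ext g x n
    simp [tensorPiIntMap]
  rw [hG]
  exact piScalarRightHom_injective_of_isNoetherianRing ℕ G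
end

section
/- In the exterior algebra over ℚ generated by degree-1 elements ê₁, ..., ê_d, the following holds: for every subset S ⊆ {1,...,d}² and every positive integer n, the element ∏_{(i,j)∈S}(êᵢ∧êⱼ) + (3n)^{|S|} can be written as a polynomial with nonnegative rational coefficients in the elements êᵢ∧êⱼ + n and êⱼ∧êᵢ + n ((i,j) ranging over all pairs), using only addition and multiplication. -/
/-!
Track the stronger invariant that both `x + t` and `-x + t` lie in the closure (`x` is balanced
at `t`). For natural numbers `s, t`, the identity
`(a + s)(x + t) + s(-x + t) + t(-a + s) = a x + 3 s t`, applied to `a` and to `-a`, shows that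
the product of an element balanced at `s` and one balanced at `t` is balanced at `3 s t`.
Since `êⱼ∧êᵢ = -(êᵢ∧êⱼ)`, every `êᵢ∧êⱼ` is balanced at `n`, so a product of `k` of them is
balanced at `(3n)^k`.
-/

open ExteriorAlgebra

def IsBalancedIn {R : Type*} [Ring R] (C : Subsemiring R) (t x : R) : Prop :=
  x + t ∈ C ∧ -x + t ∈ C

namespace IsBalancedIn

variable {R : Type*} [Ring R] {C : Subsemiring R}

theorem neg {t x : R} (h : IsBalancedIn C t x) : IsBalancedIn C t (-x) :=
  ⟨h.2, by simpa using h.1⟩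

theorem one : IsBalancedIn C 1 (1 : R) :=
  ⟨add_mem (one_mem C) (one_mem C), by simp⟩

theorem mul_add_natCast_mem {s t : ℕ} {a x : R} (ha : IsBalancedIn C s a)
    (hx : IsBalancedIn C t x) : a * x + (3 * s * t : ℕ) ∈ C := by
  have hmem : (a + s) * (x + t) + (s * (-x + t) + t * (-a + s)) ∈ C :=
    add_mem (mul_mem ha.1 hx.1)
      (add_mem (mul_mem (natCast_mem C s) hx.2) (mul_mem (natCast_mem C t) ha.2))
  have hta : (t : R) * a = a * t := (Nat.cast_commute t a).eq
  have hts : (t : R) * s = s * t := (Nat.cast_commute t (s : R)).eq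
  convert hmem using 1
  push_cast
  simp only [mul_add, add_mul, mul_neg, hta, hts]
  noncomm_ring

theorem mul {s t : ℕ} {a x : R} (ha : IsBalancedIn C s a) (hx : IsBalancedIn C t x) :
    IsBalancedIn C (3 * s * t : ℕ) (a * x) :=
  ⟨ha.mul_add_natCast_mem hx, by simpa using ha.neg.mul_add_natCast_mem hx⟩

theorem list_prod_map {ι : Type*} {m : ℕ} (L : List ι) {f : ι → R}
    (hf : ∀ i ∈ L, IsBalancedIn C m (f i)) :
    IsBalancedIn C ((3 * m) ^ L.length : ℕ) (L.map f).prod := by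
  induction L with
  | nil => simpa using one
  | cons i L ih =>
    rw [List.forall_mem_cons] at hf
    simpa [pow_succ', mul_assoc] using hf.1.mul (ih hf.2)

end IsBalancedIn

theorem ExteriorAlgebra.isBalancedIn_ι_mul_ι {R M : Type*} [CommRing R] [AddCommGroup M]
    [Module R M] {C : Subsemiring (ExteriorAlgebra R M)} {t : ExteriorAlgebra R M} {u v : M}
    (huv : ι R u * ι R v + t ∈ C) (hvu : ι R v * ι R u + t ∈ C) :
    IsBalancedIn C t (ι R u * ι R v) :=
  ⟨huv, by rwa [← neg_eq_of_add_eq_zero_right (ι_add_mul_swap u v)] at hvu⟩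

theorem wedge_prod_mem_closure_general (d : ℕ) (S : Finset (Fin d × Fin d)) (n : ℕ) :
    (S.toList.map fun p =>
        (ι ℚ (Pi.single p.1 (1 : ℚ)) * ι ℚ (Pi.single p.2 (1 : ℚ)) :
          ExteriorAlgebra ℚ (Fin d → ℚ))).prod
      + ((3 * n : ℕ) : ExteriorAlgebra ℚ (Fin d → ℚ)) ^ S.card ∈
    Subsemiring.closure
      ({x : ExteriorAlgebra ℚ (Fin d → ℚ) | ∃ i j : Fin d,
          x = ι ℚ (Pi.single i (1 : ℚ)) * ι ℚ (Pi.single j (1 : ℚ)) + (n : ExteriorAlgebra ℚ (Fin d → ℚ))} ∪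
       {x : ExteriorAlgebra ℚ (Fin d → ℚ) | ∃ q : ℚ, 0 ≤ q ∧
          x = algebraMap ℚ (ExteriorAlgebra ℚ (Fin d → ℚ)) q}) := by
  rw [← Nat.cast_pow, ← Finset.length_toList]
  refine (IsBalancedIn.list_prod_map S.toList fun p _ => ?_).1
  exact isBalancedIn_ι_mul_ι (Subsemiring.subset_closure (Or.inl ⟨p.1, p.2, rfl⟩))
    (Subsemiring.subset_closure (Or.inl ⟨p.2, p.1, rfl⟩))

/-- In the exterior algebra over `ℚ` on generators `ê₁, …, ê_d`, for every
`S ⊆ {1,…,d}²` and every positive integer `n`, the element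
`∏_{(i,j)∈S} êᵢ∧êⱼ + (3n)^{|S|}` is a polynomial with nonnegative rational coefficients
(using only addition and multiplication) in the elements `êᵢ∧êⱼ + n`
(for all pairs `(i,j)`, which includes `êⱼ∧êᵢ + n`). -/
theorem wedge_prod_mem_closure (d : ℕ) (S : Finset (Fin d × Fin d)) (n : ℕ) (hn : 0 < n) :
    (S.toList.map fun p =>
        (ι ℚ (Pi.single p.1 (1 : ℚ)) * ι ℚ (Pi.single p.2 (1 : ℚ)) :
          ExteriorAlgebra ℚ (Fin d → ℚ))).prod
      + ((3 * n : ℕ) : ExteriorAlgebra ℚ (Fin d → ℚ)) ^ S.card ∈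
    Subsemiring.closure
      ({x : ExteriorAlgebra ℚ (Fin d → ℚ) | ∃ i j : Fin d,
          x = ι ℚ (Pi.single i (1 : ℚ)) * ι ℚ (Pi.single j (1 : ℚ)) + (n : ExteriorAlgebra ℚ (Fin d → ℚ))} ∪
       {x : ExteriorAlgebra ℚ (Fin d → ℚ) | ∃ q : ℚ, 0 ≤ q ∧
          x = algebraMap ℚ (ExteriorAlgebra ℚ (Fin d → ℚ)) q}) :=
  wedge_prod_mem_closure_general d S n
end

section
/- Let ℍ₃ be the discrete Heisenberg group with elements identified with triples (x₁,x₂,x₃) ∈ ℤ³ and multiplication (x₁,x₂,x₃)·(y₁,y₂,y₃) = (x₁+y₁, x₂+y₂, x₃+y₃+x₂y₁). Then β₁(x,y) = x₃y₁ + (1/2)x₂y₁(y₁-1) is a 2-cocycle on ℍ₃ with values in ℤ: β₁(x,y) + β₁(xy,z) = β₁(x,yz) + β₁(y,z) for all x,y,z ∈ ℍ₃. -/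
/-- The discrete Heisenberg group `ℍ₃`: triples of integers with multiplication
`(x₁,x₂,x₃)·(y₁,y₂,y₃) = (x₁+y₁, x₂+y₂, x₃+y₃+x₂y₁)`. -/
@[ext] structure Heis where
  x : ℤ
  y : ℤ
  z : ℤ

namespace Heis

instance : Mul Heis := ⟨fun a b => ⟨a.x + b.x, a.y + b.y, a.z + b.z + a.y * b.x⟩⟩
instance : One Heis := ⟨⟨0, 0, 0⟩⟩
instance : Inv Heis := ⟨fun a => ⟨-a.x, -a.y, -a.z + a.y * a.x⟩⟩

lemma mul_def (a b : Heis) : a * b = ⟨a.x + b.x, a.y + b.y, a.z + b.z + a.y * b.x⟩ := rfl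
lemma one_def : (1 : Heis) = ⟨0, 0, 0⟩ := rfl
lemma inv_def (a : Heis) : a⁻¹ = ⟨-a.x, -a.y, -a.z + a.y * a.x⟩ := rfl

instance : Group Heis where
  mul_assoc a b c := by ext <;> simp [mul_def] <;> ring
  one_mul a := by ext <;> simp [mul_def, one_def]
  mul_one a := by ext <;> simp [mul_def, one_def]
  inv_mul_cancel a := by ext <;> simp [mul_def, one_def, inv_def]

/-- The generator `a = (1,0,0)`. -/
def A : Heis := ⟨1, 0, 0⟩
/-- The generator `b = (0,1,0)`. -/
def B : Heis := ⟨0, 1, 0⟩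
/-- The generator `c = (0,0,1)`. -/
def C : Heis := ⟨0, 0, 1⟩

/-- The 2-cocycle `β₁(x,y) = x₃y₁ + ½x₂y₁(y₁-1)` (ℚ-valued form). -/
def β₁ (p q : Heis) : ℚ := p.z * q.x + p.y * q.x * (q.x - 1) / 2

/-- The 2-cocycle `β₂(x,y) = (x₁x₂-x₃)y₂ + ½x₁y₂(y₂-1)` (ℚ-valued form). -/
def β₂ (p q : Heis) : ℚ := (p.x * p.y - p.z) * q.y + p.x * q.y * (q.y - 1) / 2

end Heis

open Heis in
/-- `β₁(x,y) = x₃y₁ + ½x₂y₁(y₁-1)` is a 2-cocycle on the discrete Heisenberg group with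
values in `ℤ`: it is integer-valued and satisfies
`β₁(x,y) + β₁(xy,z) = β₁(x,yz) + β₁(y,z)`. -/
theorem heis_beta1_is_integral_two_cocycle :
    (∀ p q : Heis, ∃ m : ℤ, β₁ p q = (m : ℚ)) ∧
    (∀ p q r : Heis, β₁ p q + β₁ (p * q) r = β₁ p (q * r) + β₁ q r) := by
  constructor
  · intro p q
    refine ⟨p.z * q.x + p.y * (q.x * (q.x - 1) / 2), ?_⟩
    obtain ⟨k, hk⟩ := (Int.even_mul_pred_self q.x).two_dvd
    have hk2 : q.x * (q.x - 1) / 2 = k := by omega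
    have hq : (q.x:ℚ) * (q.x - 1) = 2 * k := by exact_mod_cast hk
    simp only [β₁, hk2]
    push_cast
    field_simp
    linear_combination (p.y:ℚ) * hq
  · intro p q r
    simp only [β₁, mul_def]
    push_cast
    ring
end

section
/- In the Heisenberg group ℍ₃ (multiplication (x₁,x₂,x₃)·(y₁,y₂,y₃) = (x₁+y₁, x₂+y₂, x₃+y₃+x₂y₁)), the bar-resolution 2-chains B₁ = [c|a] - [a|c] and B₂ = [b|c] - [c|b] (with a=(1,0,0), b=(0,1,0), c=(0,0,1)) are 2-cycles: ∂₂B₁ = 0 and ∂₂B₂ = 0, where ∂₂[x|y] = [x] - [xy] + [y]. Moreover the pairings with the 2-cocycles β₁(x,y) = x₃y₁ + (1/2)x₂y₁(y₁-1) and β₂(x,y) = (x₁x₂-x₃)y₂ + (1/2)x₁y₂(y₂-1) satisfy ⟨β₁,B₁⟩ = 1, ⟨β₁,B₂⟩ = 0, ⟨β₂,B₁⟩ = 0, ⟨β₂,B₂⟩ = 1. -/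
open Heis

/-- The bar-resolution boundary `∂₂ : C₂(Γ;ℤ) → C₁(Γ;ℤ)`, `∂₂[x|y] = [x] - [xy] + [y]`. -/
noncomputable def bar_d2 : ((Heis × Heis) →₀ ℤ) →ₗ[ℤ] (Heis →₀ ℤ) :=
  Finsupp.lsum ℤ fun p => LinearMap.toSpanSingleton ℤ (Heis →₀ ℤ)
    (Finsupp.single p.1 1 - Finsupp.single (p.1 * p.2) 1 + Finsupp.single p.2 1)

/-- The pairing of a function `σ : Γ² → ℚ` with a bar 2-chain `∑ kⱼ [xⱼ|yⱼ]`. -/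
noncomputable def pair₂ (σ : Heis → Heis → ℚ) (c : (Heis × Heis) →₀ ℤ) : ℚ :=
  c.sum fun p k => (k : ℚ) * σ p.1 p.2

/-- The 2-chain `B₁ = [c|a] - [a|c]`. -/
noncomputable def B₁ : (Heis × Heis) →₀ ℤ :=
  Finsupp.single (C, A) 1 - Finsupp.single (A, C) 1

/-- The 2-chain `B₂ = [b|c] - [c|b]`. -/
noncomputable def B₂ : (Heis × Heis) →₀ ℤ :=
  Finsupp.single (B, C) 1 - Finsupp.single (C, B) 1

/-- `B₁ = [c|a] - [a|c]` and `B₂ = [b|c] - [c|b]` are bar 2-cycles of the Heisenberg group,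
and their Kronecker pairings with the 2-cocycles `β₁`, `β₂` are
`⟨β₁,B₁⟩ = 1`, `⟨β₁,B₂⟩ = 0`, `⟨β₂,B₁⟩ = 0`, `⟨β₂,B₂⟩ = 1`. -/
theorem heis_B1_B2_cycles_and_pairings :
    bar_d2 B₁ = 0 ∧ bar_d2 B₂ = 0 ∧
    pair₂ β₁ B₁ = 1 ∧ pair₂ β₁ B₂ = 0 ∧ pair₂ β₂ B₁ = 0 ∧ pair₂ β₂ B₂ = 1 := by
  have hCA : C * A = A * C := by ext <;> simp [mul_def, A, C]
  have hBC : B * C = C * B := by ext <;> simp [mul_def, B, C]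
  have pairlem : ∀ (σ : Heis → Heis → ℚ) (p q : Heis × Heis),
      pair₂ σ (Finsupp.single p 1 - Finsupp.single q 1) = σ p.1 p.2 - σ q.1 q.2 := by
    intro σ p q
    unfold pair₂
    rw [Finsupp.sum_sub_index (by intros; push_cast; ring)]
    simp [Finsupp.sum_single_index]
  have hd : ∀ p : Heis × Heis, bar_d2 (Finsupp.single p 1) =
      Finsupp.single p.1 1 - Finsupp.single (p.1 * p.2) 1 + Finsupp.single p.2 1 := by
    intro p; simp [bar_d2]
  refine ⟨?_, ?_, ?_, ?_, ?_, ?_⟩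
  · rw [B₁, map_sub, hd, hd, hCA]; abel
  · rw [B₂, map_sub, hd, hd, hBC]; abel
  · rw [B₁, pairlem]; simp [β₁, A, B, C]
  · rw [B₂, pairlem]; simp [β₁, A, B, C]
  · rw [B₁, pairlem]; simp [β₂, A, B, C]
  · rw [B₂, pairlem]; simp [β₂, A, B, C]
end
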